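/- Let X be a real tree (a geodesic metric space that is 0-hyperbolic) and let S ⊆ Isom(X) be a finite set of isometries. Then L(S) = max_{a,b ∈ S} max{ L(a), L(ab)/2 } = λ₂(S). -/

import Mathlib

open Pointwise Filter

/-- The joint displacement of a set of isometries at a point:
`L(S,x) = max_{s ∈ S} d(x, s x)`. -/
noncomputable def jointDispAt {X : Type*} [MetricSpace X] (S : Set (X ≃ᵢ X)) (x : X) : ℝ :=
  sSup ((fun s : X ≃ᵢ X => dist x (s x)) '' S)

/-- The joint minimal displacement `L(S) = inf_x L(S,x)`. -/
noncomputable def jointMinDisp {X : Type*} [MetricSpace X] (S : Set (X ≃ᵢ X)) : ℝ :=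
  sInf (Set.range (jointDispAt S))

/-- The asymptotic joint displacement `ℓ(S) = lim_n L(S^n)/n`; the limit exists by
subadditivity, hence agrees with the `limsup` used here. -/
noncomputable def asympDisp {X : Type*} [MetricSpace X] (S : Set (X ≃ᵢ X)) : ℝ :=
  Filter.limsup (fun n : ℕ => jointMinDisp (S ^ n) / n) Filter.atTop

/-- `λ(S) = max_{s ∈ S} ℓ(s)`. -/
noncomputable def lamD {X : Type*} [MetricSpace X] (S : Set (X ≃ᵢ X)) : ℝ :=
  sSup ((fun s : X ≃ᵢ X => asympDisp {s}) '' S)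

/-- `λ_k(S) = max_{1 ≤ j ≤ k} λ(S^j)/j`. -/
noncomputable def lamK {X : Type*} [MetricSpace X] (k : ℕ) (S : Set (X ≃ᵢ X)) : ℝ :=
  sSup ((fun j : ℕ => lamD (S ^ j) / j) '' Set.Icc 1 k)

/-- `λ_∞(S) = sup_{j ≥ 1} λ(S^j)/j`. -/
noncomputable def lamInf {X : Type*} [MetricSpace X] (S : Set (X ≃ᵢ X)) : ℝ :=
  sSup ((fun j : ℕ => lamD (S ^ j) / j) '' Set.Ici 1)

/-- A geodesic segment from `a` to `b`: an isometric image of the interval `[0, d(a,b)]`. -/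
def IsGeodesicSegment {X : Type*} [MetricSpace X] (s : Set X) (a b : X) : Prop :=
  ∃ f : ℝ → X, f 0 = a ∧ f (dist a b) = b ∧
    (∀ u ∈ Set.Icc (0 : ℝ) (dist a b), ∀ v ∈ Set.Icc (0 : ℝ) (dist a b),
      dist (f u) (f v) = |u - v|) ∧
    s = f '' Set.Icc (0 : ℝ) (dist a b)

/-- A geodesic metric space: every two points are joined by a geodesic segment. -/
def GeodesicSpace (X : Type*) [MetricSpace X] : Prop :=
  ∀ a b : X, ∃ s : Set X, IsGeodesicSegment s a b

/-- `δ`-hyperbolicity: every geodesic triangle is `δ`-thin, i.e. each side is contained in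
the closed `δ`-neighborhood of the union of the other two sides. -/
def GromovHyperbolic (X : Type*) [MetricSpace X] (δ : ℝ) : Prop :=
  ∀ a b c : X, ∀ sab sbc sca : Set X,
    IsGeodesicSegment sab a b → IsGeodesicSegment sbc b c → IsGeodesicSegment sca c a →
      (∀ x ∈ sab, ∃ y ∈ sbc ∪ sca, dist x y ≤ δ) ∧
      (∀ x ∈ sbc, ∃ y ∈ sab ∪ sca, dist x y ≤ δ) ∧
      (∀ x ∈ sca, ∃ y ∈ sab ∪ sbc, dist x y ≤ δ)

/-- The CAT(0) comparison inequality: for all `a b c` and every midpoint `m` of a geodesic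
from `b` to `c`, `2 d(a,m)² ≤ d(a,b)² + d(a,c)² - d(b,c)²/2`. -/
def CAT0 (X : Type*) [MetricSpace X] : Prop :=
  ∀ a b c m : X, dist b m = dist b c / 2 → dist m c = dist b c / 2 →
    2 * dist a m ^ 2 ≤ dist a b ^ 2 + dist a c ^ 2 - dist b c ^ 2 / 2

/-- A subset is (geodesically) convex if every geodesic segment between two of its points is
contained in it. -/
def GeodConvex {X : Type*} [MetricSpace X] (C : Set X) : Prop :=
  ∀ a ∈ C, ∀ b ∈ C, ∀ s : Set X, IsGeodesicSegment s a b → s ⊆ C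

/-- Translation length `L(g) = inf_x d(x, g x)`. -/
noncomputable def transLen {X : Type*} [MetricSpace X] (g : X ≃ᵢ X) : ℝ :=
  sInf (Set.range fun x : X => dist x (g x))

/-- Asymptotic translation length `ℓ(g) = lim_n L(g^n)/n`. -/
noncomputable def asympTransLen {X : Type*} [MetricSpace X] (g : X ≃ᵢ X) : ℝ :=
  Filter.limsup (fun n : ℕ => transLen (g ^ n) / n) Filter.atTop

/-!
In a real tree the four-point condition holds and any three points have a median. Hence the
displacement sublevel sets `C_g(r) = {x | d(x, g x) ≤ r}` are closed and convex, and convex sets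
have the Helly property with pairwise intersections: `L(S) ≤ r` as soon as `C_a(r) ∩ C_b(r)` is
nonempty for all `a, b ∈ S`. If instead `C_a(r)` and `C_b(r)` are nonempty and disjoint, let
`[z, w]` be the bridge between them; then `z` lies on an axis of `a b`, which translates it by
`2 r + 2 d(z, w) > 2 r`, so `L(a b) > 2 r`. The converse bounds `L(a) ≤ L(S)` and
`L(a b) ≤ 2 L(S)` are the triangle inequality. Finally `ℓ(g) = L(g)`, since
`L(g²) ≥ 2 L(g)` (look at the midpoint of `[x, g x]`).
-/

open Set

section Geodesics

variable {X : Type*} [MetricSpace X]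

def MetricBtw (p m q : X) : Prop := dist p m + dist m q = dist p q

def IsGeodesicParam (f : ℝ → X) (a b : X) : Prop :=
  f 0 = a ∧ f (dist a b) = b ∧
    ∀ u ∈ Icc (0 : ℝ) (dist a b), ∀ v ∈ Icc (0 : ℝ) (dist a b), dist (f u) (f v) = |u - v|

lemma MetricBtw.symm {p m q : X} (h : MetricBtw p m q) : MetricBtw q m p := by
  unfold MetricBtw at *
  linarith [dist_comm p q, dist_comm p m, dist_comm m q]

lemma MetricBtw.map (g : X ≃ᵢ X) {p m q : X} (h : MetricBtw p m q) :
    MetricBtw (g p) (g m) (g q) := by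
  simpa only [MetricBtw, g.dist_eq] using h

namespace IsGeodesicParam

variable {f : ℝ → X} {a b : X} {u : ℝ}

lemma dist_left (hf : IsGeodesicParam f a b) (hu : u ∈ Icc 0 (dist a b)) : dist a (f u) = u := by
  obtain ⟨hf0, -, hiso⟩ := hf
  rw [← hf0, hiso 0 ⟨le_rfl, dist_nonneg⟩ u hu, zero_sub, abs_neg, abs_of_nonneg hu.1]

lemma dist_right (hf : IsGeodesicParam f a b) (hu : u ∈ Icc 0 (dist a b)) :
    dist (f u) b = dist a b - u := by
  obtain ⟨-, hf1, hiso⟩ := hf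
  conv_lhs => rw [← hf1]
  rw [hiso u hu _ ⟨dist_nonneg, le_rfl⟩, abs_of_nonpos (by linarith [hu.2]), neg_sub]

lemma metricBtw (hf : IsGeodesicParam f a b) (hu : u ∈ Icc 0 (dist a b)) :
    MetricBtw a (f u) b := by
  rw [MetricBtw, hf.dist_left hu, hf.dist_right hu]
  ring

lemma continuousOn (hf : IsGeodesicParam f a b) : ContinuousOn f (Icc 0 (dist a b)) :=
  (LipschitzOnWith.of_dist_le_mul fun u hu v hv => by
    rw [hf.2.2 u hu v hv, Real.dist_eq, NNReal.coe_one, one_mul]).continuousOn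

end IsGeodesicParam

lemma GeodesicSpace.exists_isGeodesicParam (hgeo : GeodesicSpace X) (a b : X) :
    ∃ f : ℝ → X, IsGeodesicParam f a b := by
  obtain ⟨-, f, hf0, hf1, hiso, -⟩ := hgeo a b
  exact ⟨f, hf0, hf1, hiso⟩

lemma GeodesicSpace.exists_dist_eq (hgeo : GeodesicSpace X) (x y : X) {t : ℝ} (h0 : 0 ≤ t)
    (h1 : t ≤ dist x y) : ∃ m : X, dist x m = t ∧ dist m y = dist x y - t := by
  obtain ⟨f, hf⟩ := hgeo.exists_isGeodesicParam x y
  exact ⟨f t, hf.dist_left ⟨h0, h1⟩, hf.dist_right ⟨h0, h1⟩⟩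

lemma IsGeodesicSegment.metricBtw_of_mem {s : Set X} {a b y : X} (hs : IsGeodesicSegment s a b)
    (hy : y ∈ s) : MetricBtw a y b := by
  obtain ⟨f, hf0, hf1, hiso, rfl⟩ := hs
  obtain ⟨u, hu, rfl⟩ := hy
  exact IsGeodesicParam.metricBtw ⟨hf0, hf1, hiso⟩ hu

end Geodesics

section RealTree

variable {X : Type*} [MetricSpace X]

def FourPointCondition (X : Type*) [MetricSpace X] : Prop :=
  ∀ w x y z : X, dist w y + dist x z ≤ max (dist w x + dist y z) (dist w z + dist x y)

def HasMedians (X : Type*) [MetricSpace X] : Prop :=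
  ∀ x y z : X, ∃ m : X, MetricBtw x m y ∧ MetricBtw x m z ∧ MetricBtw y m z

lemma exists_metricBtw_of_isGeodesicParam (hgeo : GeodesicSpace X)
    (htree : GromovHyperbolic X 0) {f : ℝ → X} {x z : X} (hf : IsGeodesicParam f x z) (w : X) :
    ∃ u ∈ Icc 0 (dist x z), MetricBtw x (f u) w ∧ MetricBtw z (f u) w := by
  obtain ⟨szw, hszw⟩ := hgeo z w
  obtain ⟨swx, hswx⟩ := hgeo w x
  have hseg : IsGeodesicSegment (f '' Icc 0 (dist x z)) x z := ⟨f, hf.1, hf.2.1, hf.2.2, rfl⟩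
  have hthin := (htree x z w _ szw swx hseg hszw hswx).1
  set φ : ℝ → ℝ := fun u => dist x (f u) + dist (f u) w - dist x w with hφ
  set ψ : ℝ → ℝ := fun u => dist z (f u) + dist (f u) w - dist z w with hψ
  have hφ_nonneg : ∀ u, 0 ≤ φ u := fun u => by simp only [hφ]; linarith [dist_triangle x (f u) w]
  have hψ_nonneg : ∀ u, 0 ≤ ψ u := fun u => by simp only [hψ]; linarith [dist_triangle z (f u) w]
  -- 0-thinness: every point of `[x, z]` lies on `[z, w]` or on `[w, x]`
  have hcover : ∀ u ∈ Icc 0 (dist x z), φ u = 0 ∨ ψ u = 0 := by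
    intro u hu
    obtain ⟨y, hy, hdy⟩ := hthin (f u) ⟨u, hu, rfl⟩
    rw [← dist_le_zero.mp hdy] at hy
    rcases hy with hy | hy
    · have := hszw.metricBtw_of_mem hy
      exact Or.inr (by simp only [hψ]; unfold MetricBtw at this; linarith)
    · have := (hswx.metricBtw_of_mem hy).symm
      exact Or.inl (by simp only [hφ]; unfold MetricBtw at this; linarith)
  -- `φ - ψ` changes sign on `[0, dist x z]`, and at a zero both defects vanish
  have hcont : ContinuousOn (fun u => φ u - ψ u) (Icc 0 (dist x z)) := by
    have := hf.continuousOn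
    simp only [hφ, hψ]
    fun_prop
  have hφ0 : φ 0 = 0 := by simp [hφ, hf.1]
  have hψD : ψ (dist x z) = 0 := by simp [hψ, hf.2.1]
  have hzero : (0 : ℝ) ∈ Icc (φ 0 - ψ 0) (φ (dist x z) - ψ (dist x z)) :=
    ⟨by linarith [hψ_nonneg 0], by linarith [hφ_nonneg (dist x z)]⟩
  obtain ⟨u, hu, hφψ⟩ := intermediate_value_Icc dist_nonneg hcont hzero
  have hφu : φ u = 0 := by
    rcases hcover u hu with h | h <;> simp only at hφψ <;> linarith
  refine ⟨u, hu, ?_, ?_⟩ <;> unfold MetricBtw <;> simp only [hφ, hψ] at hφu hφψ <;> linarith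

lemma fourPointCondition_of_tree (hgeo : GeodesicSpace X) (htree : GromovHyperbolic X 0) :
    FourPointCondition X := by
  intro w x y z
  obtain ⟨f, hf⟩ := hgeo.exists_isGeodesicParam x z
  obtain ⟨u, hu, hxw, hzw⟩ := exists_metricBtw_of_isGeodesicParam hgeo htree hf w
  obtain ⟨v, hv, hxy, hzy⟩ := exists_metricBtw_of_isGeodesicParam hgeo htree hf y
  have hwy : dist w y ≤ dist w (f u) + |u - v| + dist (f v) y := by
    rw [← hf.2.2 u hu v hv]
    exact dist_triangle4 _ _ _ _
  unfold MetricBtw at hxw hzw hxy hzy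
  rw [hf.dist_left hu] at hxw
  rw [hf.dist_left hv] at hxy
  rw [dist_comm z, hf.dist_right hu] at hzw
  rw [dist_comm z, hf.dist_right hv] at hzy
  rcases abs_cases (u - v) with ⟨h, -⟩ | ⟨h, -⟩ <;> rw [h] at hwy
  · exact le_max_of_le_left (by linarith [dist_comm w x, dist_comm w (f u), dist_comm y z])
  · exact le_max_of_le_right (by
      linarith [dist_comm w z, dist_comm w (f u), dist_comm x y, dist_comm y z])

lemma hasMedians_of_tree (hgeo : GeodesicSpace X) (htree : GromovHyperbolic X 0) :
    HasMedians X := by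
  intro x y z
  obtain ⟨f, hf⟩ := hgeo.exists_isGeodesicParam x y
  obtain ⟨u, hu, hxz, hyz⟩ := exists_metricBtw_of_isGeodesicParam hgeo htree hf z
  exact ⟨f u, hf.metricBtw hu, hxz, hyz⟩

end RealTree

section FourPoint

variable {X : Type*} [MetricSpace X]

lemma MetricBtw.shrink_right {x z w q : X} (hxzq : MetricBtw x z q) (hzwq : MetricBtw z w q) :
    MetricBtw x z w := by
  unfold MetricBtw at *
  linarith [dist_triangle x z w, dist_triangle x w q]

lemma MetricBtw.trans_of_ne (h4 : FourPointCondition X) {x z w y : X} (hxzw : MetricBtw x z w)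
    (hzwy : MetricBtw z w y) (hzw : z ≠ w) : MetricBtw x z y := by
  have hpos : 0 < dist z w := dist_pos.mpr hzw
  unfold MetricBtw at *
  rcases le_max_iff.mp (h4 x z w y) with h | h <;> linarith [dist_triangle x z y]

lemma MetricBtw.eq_of_dist_eq (h4 : FourPointCondition X) {p m m' q : X} (hm : MetricBtw p m q)
    (hm' : MetricBtw p m' q) (h : dist p m = dist p m') : m = m' := by
  unfold MetricBtw at hm hm'
  refine dist_le_zero.mp ?_
  rcases le_max_iff.mp (h4 m p m' q) with h' | h' <;> linarith [dist_comm p m, dist_comm p m']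

lemma IsGeodesicParam.apply_dist_eq (h4 : FourPointCondition X) {f : ℝ → X} {y p m : X}
    (hf : IsGeodesicParam f y p) (hm : MetricBtw y m p) : f (dist y m) = m := by
  have hu : dist y m ∈ Icc 0 (dist y p) :=
    ⟨dist_nonneg, by unfold MetricBtw at hm; linarith [dist_nonneg (x := m) (y := p)]⟩
  exact (hf.metricBtw hu).eq_of_dist_eq h4 hm (hf.dist_left hu)

def IsBtwConvex (C : Set X) : Prop :=
  ∀ ⦃p⦄, p ∈ C → ∀ ⦃q⦄, q ∈ C → ∀ ⦃m⦄, MetricBtw p m q → m ∈ C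

lemma IsBtwConvex.inter {C D : Set X} (hC : IsBtwConvex C) (hD : IsBtwConvex D) :
    IsBtwConvex (C ∩ D) :=
  fun _ hp _ hq _ hm => ⟨hC hp.1 hq.1 hm, hD hp.2 hq.2 hm⟩

lemma helly_three (hmed : HasMedians X) {C₁ C₂ C₃ : Set X} (h₁ : IsBtwConvex C₁)
    (h₂ : IsBtwConvex C₂) (h₃ : IsBtwConvex C₃) (h₁₂ : (C₁ ∩ C₂).Nonempty)
    (h₁₃ : (C₁ ∩ C₃).Nonempty) (h₂₃ : (C₂ ∩ C₃).Nonempty) : (C₁ ∩ C₂ ∩ C₃).Nonempty := by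
  obtain ⟨x, hx₁, hx₂⟩ := h₁₂
  obtain ⟨y, hy₁, hy₃⟩ := h₁₃
  obtain ⟨z, hz₂, hz₃⟩ := h₂₃
  obtain ⟨m, hxy, hxz, hyz⟩ := hmed x y z
  exact ⟨m, ⟨h₁ hx₁ hy₁ hxy, h₂ hx₂ hz₂ hxz⟩, h₃ hy₃ hz₃ hyz⟩

lemma helly_finset (hmed : HasMedians X) {ι : Type*} {s : Finset ι} (hs : s.Nonempty)
    (C : ι → Set X) (hC : ∀ i ∈ s, IsBtwConvex (C i))
    (hpair : ∀ i ∈ s, ∀ j ∈ s, (C i ∩ C j).Nonempty) : ∃ x, ∀ i ∈ s, x ∈ C i := by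
  induction hs using Finset.Nonempty.cons_induction generalizing C with
  | singleton i =>
    obtain ⟨x, hx, -⟩ := hpair i (Finset.mem_singleton_self i) i (Finset.mem_singleton_self i)
    exact ⟨x, fun j hj => Finset.mem_singleton.mp hj ▸ hx⟩
  | cons i s hi hs ih =>
    have hCi := hC i (Finset.mem_cons_self i s)
    obtain ⟨x, hx⟩ := ih (fun j => C j ∩ C i)
      (fun j hj => (hC j (Finset.mem_cons_of_mem hj)).inter hCi)
      (fun j hj k hk => by
        obtain ⟨x, ⟨hxj, hxk⟩, hxi⟩ := helly_three hmed (hC j (Finset.mem_cons_of_mem hj))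
          (hC k (Finset.mem_cons_of_mem hk)) hCi
          (hpair j (Finset.mem_cons_of_mem hj) k (Finset.mem_cons_of_mem hk))
          (hpair j (Finset.mem_cons_of_mem hj) i (Finset.mem_cons_self i s))
          (hpair k (Finset.mem_cons_of_mem hk) i (Finset.mem_cons_self i s))
        exact ⟨x, ⟨hxj, hxi⟩, hxk, hxi⟩)
    refine ⟨x, fun j hj => ?_⟩
    rcases Finset.mem_cons.mp hj with rfl | hj
    · obtain ⟨k, hk⟩ := hs
      exact (hx k hk).2
    · exact (hx j hj).1

end FourPoint

section Gates

variable {X : Type*} [MetricSpace X]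

/-- `u` is the nearest-point projection of `y` to `C`, in the strong form that it lies on every
geodesic from `y` to a point of `C`. -/
def IsGate (C : Set X) (y u : X) : Prop := u ∈ C ∧ ∀ x ∈ C, MetricBtw y u x

lemma exists_isGate (hgeo : GeodesicSpace X) (h4 : FourPointCondition X) (hmed : HasMedians X)
    {C : Set X} (hconv : IsBtwConvex C) (hclosed : IsClosed C) (hne : C.Nonempty) (y : X) :
    ∃ u, IsGate C y u := by
  obtain ⟨p, hp⟩ := hne
  obtain ⟨f, hf⟩ := hgeo.exists_isGeodesicParam y p
  -- `f (sInf T)` is the first point of `C` on the geodesic from `y` to `p`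
  set T := Icc 0 (dist y p) ∩ f ⁻¹' C
  have hT : IsClosed T := hf.continuousOn.preimage_isClosed_of_isClosed isClosed_Icc hclosed
  have hpT : dist y p ∈ T := ⟨⟨dist_nonneg, le_rfl⟩, by rw [mem_preimage, hf.2.1]; exact hp⟩
  have hTbdd : BddBelow T := ⟨0, fun t ht => ht.1.1⟩
  have ht₀ : sInf T ∈ T := hT.csInf_mem ⟨_, hpT⟩ hTbdd
  refine ⟨f (sInf T), ht₀.2, fun x hx => ?_⟩
  obtain ⟨m, hyx, hyp, hxp⟩ := hmed y x p
  have hfm := hf.apply_dist_eq h4 hyp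
  have hmT : dist y m ∈ T :=
    ⟨⟨dist_nonneg, by unfold MetricBtw at hyp; linarith [dist_nonneg (x := m) (y := p)]⟩,
      by rw [mem_preimage, hfm]; exact hconv hx hp hxp⟩
  have hle : sInf T ≤ dist y m := csInf_le hTbdd hmT
  have hdm : dist (f (sInf T)) m = dist y m - sInf T := by
    conv_lhs => rw [← hfm]
    rw [hf.2.2 _ ht₀.1 _ hmT.1, abs_of_nonpos (by linarith), neg_sub]
  have hdy := hf.dist_left ht₀.1
  unfold MetricBtw at hyx ⊢
  linarith [dist_triangle (f (sInf T)) m x, dist_triangle y (f (sInf T)) x]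

lemma exists_isGate_isGate (hgeo : GeodesicSpace X) (h4 : FourPointCondition X)
    (hmed : HasMedians X) {C D : Set X} (hC : IsBtwConvex C) (hCc : IsClosed C)
    (hCn : C.Nonempty) (hD : IsBtwConvex D) (hDc : IsClosed D) (hDn : D.Nonempty) :
    ∃ z w, IsGate C w z ∧ IsGate D z w := by
  obtain ⟨q, hq⟩ := hDn
  obtain ⟨z, hzC, hz⟩ := exists_isGate hgeo h4 hmed hC hCc hCn q
  obtain ⟨w, hwD, hw⟩ := exists_isGate hgeo h4 hmed hD hDc ⟨q, hq⟩ z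
  exact ⟨z, w, ⟨hzC, fun x hx => ((hz x hx).symm.shrink_right (hw q hq)).symm⟩, hwD, hw⟩

def dispSublevel (g : X ≃ᵢ X) (r : ℝ) : Set X := {x | dist x (g x) ≤ r}

@[simp]
lemma mem_dispSublevel {g : X ≃ᵢ X} {r : ℝ} {x : X} : x ∈ dispSublevel g r ↔ dist x (g x) ≤ r :=
  Iff.rfl

lemma apply_mem_dispSublevel {g : X ≃ᵢ X} {r : ℝ} {x : X} (hx : x ∈ dispSublevel g r) :
    g x ∈ dispSublevel g r := by
  rwa [mem_dispSublevel, g.dist_eq]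

lemma inv_apply_mem_dispSublevel {g : X ≃ᵢ X} {r : ℝ} {x : X} (hx : x ∈ dispSublevel g r) :
    g⁻¹ x ∈ dispSublevel g r := by
  rwa [mem_dispSublevel, IsometryEquiv.apply_inv_self, ← g.dist_eq,
    IsometryEquiv.apply_inv_self]

lemma isClosed_dispSublevel (g : X ≃ᵢ X) (r : ℝ) : IsClosed (dispSublevel g r) :=
  isClosed_le (continuous_id.dist g.continuous) continuous_const

lemma isBtwConvex_dispSublevel (h4 : FourPointCondition X) (g : X ≃ᵢ X) (r : ℝ) :
    IsBtwConvex (dispSublevel g r) := by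
  intro p hp q hq m hm
  have h := h4 m (g p) (g m) (g q)
  rw [g.dist_eq p q, g.dist_eq m q, g.dist_eq p m] at h
  have hp' := dist_triangle m p (g p)
  have hq' := dist_triangle m q (g q)
  unfold MetricBtw at hm
  simp only [mem_dispSublevel] at *
  rcases le_max_iff.mp h with h | h <;> linarith [dist_comm m p, dist_comm m q]

lemma IsGate.dist_apply_eq (hgeo : GeodesicSpace X) {g : X ≃ᵢ X} {r : ℝ} {y u : X}
    (hgate : IsGate (dispSublevel g r) y u) (hy : y ∉ dispSublevel g r) : dist u (g u) = r := by
  obtain ⟨hu, hbtw⟩ := hgate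
  refine le_antisymm hu (not_lt.mp fun hlt => ?_)
  have hyu : 0 < dist u y := dist_pos.mpr fun h => hy (h ▸ hu)
  -- a short step from `u` towards `y` stays in the sublevel set
  set t := min (dist u y) ((r - dist u (g u)) / 2)
  have ht : 0 < t := lt_min hyu (by linarith)
  obtain ⟨v, huv, hvy⟩ := hgeo.exists_dist_eq u y ht.le (min_le_left _ _)
  have hv : v ∈ dispSublevel g r := by
    have := dist_triangle4 v u (g u) (g v)
    rw [g.dist_eq, dist_comm v u, huv] at this
    exact this.trans (by linarith [min_le_right (dist u y) ((r - dist u (g u)) / 2)])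
  have := hbtw v hv
  unfold MetricBtw at this
  linarith [dist_comm y u, dist_comm y v]

end Gates

section Axis

variable {X : Type*} [MetricSpace X]

lemma IsometryEquiv.pow_succ_apply (w : X ≃ᵢ X) (n : ℕ) (x : X) :
    (w ^ (n + 1)) x = (w ^ n) (w x) := by
  rw [pow_succ, IsometryEquiv.mul_apply]

lemma dist_pow_apply_le (w : X ≃ᵢ X) (y : X) (n : ℕ) :
    dist y ((w ^ n) y) ≤ n * dist y (w y) := by
  induction n with
  | zero => simp
  | succ n ih =>
    have := dist_triangle y ((w ^ n) y) ((w ^ n) (w y))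
    rw [(w ^ n).dist_eq] at this
    rw [w.pow_succ_apply]
    push_cast
    linarith

lemma dist_apply_le_of_forall_dist_pow_apply (w : X ≃ᵢ X) {z : X}
    (hz : ∀ n : ℕ, dist z ((w ^ n) z) = n * dist z (w z)) (y : X) :
    dist z (w z) ≤ dist y (w y) := by
  have key : ∀ n : ℕ, n * (dist z (w z) - dist y (w y)) ≤ 2 * dist z y := by
    intro n
    have := dist_triangle4 z y ((w ^ n) y) ((w ^ n) z)
    rw [(w ^ n).dist_eq, hz n, dist_comm y z] at this
    linarith [dist_pow_apply_le w y n]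
  by_contra! h
  obtain ⟨n, hn⟩ := exists_nat_gt (2 * dist z y / (dist z (w z) - dist y (w y)))
  rw [div_lt_iff₀ (by linarith)] at hn
  linarith [key n]

lemma dist_apply_eq_of_metricBtw (h4 : FourPointCondition X) (g : X ≃ᵢ X) {y v : X}
    (hv : g v ≠ v) (h₁ : MetricBtw y v (g v)) (h₂ : MetricBtw y v (g⁻¹ v)) :
    dist y (g y) = 2 * dist y v + dist v (g v) := by
  have h₃ : MetricBtw (g y) (g v) v := by simpa using h₂.map g
  have h₄ := h₃.trans_of_ne h4 h₁.symm hv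
  unfold MetricBtw at h₁ h₄
  rw [g.dist_eq] at h₄
  linarith [dist_comm y (g y), dist_comm (g v) y]

lemma dist_pow_apply_eq_mul (h4 : FourPointCondition X) (w : X ≃ᵢ X) {z : X}
    (hz : MetricBtw (w⁻¹ z) z (w z)) (hne : z ≠ w z) (n : ℕ) :
    dist z ((w ^ n) z) = n * dist z (w z) := by
  have hstep : ∀ k, dist ((w ^ k) z) ((w ^ (k + 1)) z) = dist z (w z) := fun k => by
    rw [w.pow_succ_apply, (w ^ k).dist_eq]
  -- the orbit of `z` is a local geodesic, hence a geodesic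
  have key : ∀ n : ℕ, dist z ((w ^ n) z) = n * dist z (w z) ∧
      dist z ((w ^ (n + 1)) z) = (n + 1) * dist z (w z) := by
    intro n
    induction n with
    | zero => simp
    | succ n ih =>
      refine ⟨by push_cast; exact ih.2, ?_⟩
      have hmove := hz.map (w ^ (n + 1))
      rw [w.pow_succ_apply, IsometryEquiv.apply_inv_self, ← w.pow_succ_apply] at hmove
      have hprev : MetricBtw z ((w ^ n) z) ((w ^ (n + 1)) z) := by
        unfold MetricBtw
        rw [ih.1, ih.2, hstep]
        ring
      have hne' : (w ^ (n + 1)) z ≠ (w ^ n) z := by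
        rw [← dist_pos, dist_comm, hstep]
        exact dist_pos.mpr hne
      have := hmove.symm.trans_of_ne h4 hprev.symm hne'
      unfold MetricBtw at this
      rw [dist_comm, hstep] at this
      push_cast
      linarith [ih.2, dist_comm z ((w ^ (n + 1)) z), dist_comm z ((w ^ (n + 1 + 1)) z)]
  exact (key n).1

end Axis

section PingPong

variable {X : Type*} [MetricSpace X]

lemma metricBtw_mul_apply_of_isGate (h4 : FourPointCondition X) {a b : X ≃ᵢ X} {r : ℝ}
    (hr : 0 < r) {z w : X} (hz : IsGate (dispSublevel a r) w z)
    (hw : IsGate (dispSublevel b r) z w) (hzw : z ≠ w) (hza : dist z (a z) = r)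
    (hwb : dist w (b w) = r) :
    MetricBtw ((a * b)⁻¹ z) z ((a * b) z) ∧ dist z ((a * b) z) = 2 * r + 2 * dist z w := by
  have hbw : b w ≠ w := fun h => by rw [h, dist_self] at hwb; linarith
  have hzbz : dist z (b z) = 2 * dist z w + r := by
    rw [dist_apply_eq_of_metricBtw h4 b hbw (hw.2 _ (apply_mem_dispSublevel hw.1))
      (hw.2 _ (inv_apply_mem_dispSublevel hw.1)), hwb]
  have hbwz : dist (b w) (b z) = dist z w := by rw [b.dist_eq, dist_comm]
  -- the broken geodesic `a⁻¹ z, z, w, b w, b z` is a geodesic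
  have hzwbz : MetricBtw z w (b z) := by
    unfold MetricBtw
    linarith [dist_triangle z w (b z), dist_triangle w (b w) (b z)]
  have hinv : MetricBtw (a⁻¹ z) z (b z) :=
    (hz.2 _ (inv_apply_mem_dispSublevel hz.1)).symm.trans_of_ne h4 hzwbz hzw
  have hainv : dist (a⁻¹ z) z = r := by rw [← a.dist_eq, IsometryEquiv.apply_inv_self, hza]
  have hmul : dist z ((a * b) z) = dist (a⁻¹ z) (b z) := by
    rw [IsometryEquiv.mul_apply, ← a.dist_eq (a⁻¹ z), IsometryEquiv.apply_inv_self]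
  have hmul_inv : dist z ((a * b)⁻¹ z) = dist z ((a * b) z) := by
    rw [dist_comm, ← (a * b).dist_eq, IsometryEquiv.apply_inv_self]
  have hw_inv : dist w ((a * b)⁻¹ z) = dist (b w) (a⁻¹ z) := by
    rw [mul_inv_rev, IsometryEquiv.mul_apply, ← b.dist_eq, IsometryEquiv.apply_inv_self]
  have hz_az : MetricBtw z (a z) ((a * b) z) := by simpa using hinv.map a
  unfold MetricBtw at hinv
  have hzw_inv : MetricBtw z w ((a * b)⁻¹ z) := by
    unfold MetricBtw
    linarith [dist_triangle (a⁻¹ z) (b w) (b z), dist_triangle4 (b w) w z (a⁻¹ z),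
      dist_comm (b w) (a⁻¹ z), dist_comm (b w) w, dist_comm w z, dist_comm z (a⁻¹ z)]
  have hw_mul : MetricBtw w z ((a * b) z) :=
    (hz.2 _ (apply_mem_dispSublevel hz.1)).trans_of_ne h4 hz_az
      (dist_pos.mp (by rw [hza]; exact hr))
  exact ⟨(hw_mul.symm.trans_of_ne h4 hzw_inv hzw).symm, by linarith⟩

lemma two_mul_lt_dist_mul_apply (hgeo : GeodesicSpace X) (h4 : FourPointCondition X)
    (hmed : HasMedians X) (a b : X ≃ᵢ X) {r : ℝ} (hr : 0 < r)
    (ha : (dispSublevel a r).Nonempty) (hb : (dispSublevel b r).Nonempty)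
    (hab : Disjoint (dispSublevel a r) (dispSublevel b r)) (y : X) :
    2 * r < dist y ((a * b) y) := by
  obtain ⟨z, w, hz, hw⟩ := exists_isGate_isGate hgeo h4 hmed (isBtwConvex_dispSublevel h4 a r)
    (isClosed_dispSublevel a r) ha (isBtwConvex_dispSublevel h4 b r) (isClosed_dispSublevel b r) hb
  have hzw : z ≠ w := hab.ne_of_mem hz.1 hw.1
  obtain ⟨hbtw, hdist⟩ := metricBtw_mul_apply_of_isGate h4 hr hz hw hzw
    (hz.dist_apply_eq hgeo fun h => hab.ne_of_mem h hw.1 rfl)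
    (hw.dist_apply_eq hgeo fun h => hab.ne_of_mem hz.1 h rfl)
  have hlt : 2 * r < dist z ((a * b) z) := by rw [hdist]; linarith [dist_pos.mpr hzw]
  exact hlt.trans_le (dist_apply_le_of_forall_dist_pow_apply _
    (dist_pow_apply_eq_mul h4 _ hbtw (dist_pos.mp (by linarith))) y)

end PingPong

section Displacement

variable {X : Type*} [MetricSpace X]

lemma transLen_nonneg (g : X ≃ᵢ X) : 0 ≤ transLen g :=
  Real.sInf_nonneg (forall_mem_range.2 fun _ => dist_nonneg)

lemma transLen_le (g : X ≃ᵢ X) (x : X) : transLen g ≤ dist x (g x) :=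
  csInf_le ⟨0, forall_mem_range.2 fun _ => dist_nonneg⟩ ⟨x, rfl⟩

lemma le_transLen [Nonempty X] {g : X ≃ᵢ X} {c : ℝ} (h : ∀ x, c ≤ dist x (g x)) :
    c ≤ transLen g :=
  le_csInf (range_nonempty _) (forall_mem_range.2 h)

lemma exists_dist_apply_lt [Nonempty X] {g : X ≃ᵢ X} {r : ℝ} (h : transLen g < r) :
    ∃ x, dist x (g x) < r := by
  obtain ⟨_, ⟨x, rfl⟩, hx⟩ := exists_lt_of_csInf_lt (range_nonempty _) h
  exact ⟨x, hx⟩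

lemma exists_two_mul_dist_apply_le (hgeo : GeodesicSpace X) (h4 : FourPointCondition X)
    (g : X ≃ᵢ X) (x : X) : ∃ m, 2 * dist m (g m) ≤ dist x (g (g x)) := by
  obtain ⟨m, hxm, hmg⟩ := hgeo.exists_dist_eq x (g x) (t := dist x (g x) / 2) (by positivity)
    (by linarith [dist_nonneg (x := x) (y := g x)])
  have e₁ : dist (g x) (g (g x)) = dist x (g x) := g.dist_eq _ _
  have e₂ : dist (g m) (g (g x)) = dist m (g x) := g.dist_eq _ _
  have e₃ : dist (g x) (g m) = dist x m := g.dist_eq _ _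
  have hs := dist_triangle x (g x) (g (g x))
  refine ⟨m, ?_⟩
  rcases le_max_iff.mp (h4 x (g x) (g m) (g (g x))) with h₁ | h₁ <;>
  rcases le_max_iff.mp (h4 m (g x) (g m) x) with h₂ | h₂ <;>
  linarith [dist_comm (g x) x, dist_comm m x, dist_comm (g m) x,
    dist_nonneg (x := x) (y := g (g x))]

lemma two_mul_transLen_le [Nonempty X] (hgeo : GeodesicSpace X) (h4 : FourPointCondition X)
    (g : X ≃ᵢ X) : 2 * transLen g ≤ transLen (g * g) :=
  le_transLen fun x => by
    obtain ⟨m, hm⟩ := exists_two_mul_dist_apply_le hgeo h4 g x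
    rw [IsometryEquiv.mul_apply]
    linarith [transLen_le g m]

lemma two_pow_mul_transLen_le [Nonempty X] (hgeo : GeodesicSpace X) (h4 : FourPointCondition X)
    (g : X ≃ᵢ X) (k : ℕ) : 2 ^ k * transLen g ≤ transLen (g ^ 2 ^ k) := by
  induction k with
  | zero => simp
  | succ k ih =>
    have hpow : g ^ 2 ^ (k + 1) = g ^ 2 ^ k * g ^ 2 ^ k := by rw [pow_succ, pow_mul, sq]
    rw [hpow, pow_succ]
    linarith [two_mul_transLen_le hgeo h4 (g ^ 2 ^ k)]

lemma transLen_pow_div_le [Nonempty X] (g : X ≃ᵢ X) (n : ℕ) :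
    transLen (g ^ n) / n ≤ transLen g := by
  refine le_transLen fun x => ?_
  rcases n.eq_zero_or_pos with rfl | hn
  · simp
  · rw [div_le_iff₀ (by exact_mod_cast hn)]
    linarith [transLen_le (g ^ n) x, dist_pow_apply_le g x n]

lemma jointDispAt_singleton (g : X ≃ᵢ X) : jointDispAt {g} = fun x => dist x (g x) := by
  funext x
  simp [jointDispAt]

lemma jointMinDisp_singleton (g : X ≃ᵢ X) : jointMinDisp {g} = transLen g := by
  rw [jointMinDisp, jointDispAt_singleton, transLen]

lemma jointMinDisp_of_isEmpty [IsEmpty X] (S : Set (X ≃ᵢ X)) : jointMinDisp S = 0 := by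
  rw [jointMinDisp, range_eq_empty, Real.sInf_empty]

lemma asympDisp_singleton [Nonempty X] (hgeo : GeodesicSpace X) (h4 : FourPointCondition X)
    (g : X ≃ᵢ X) : asympDisp {g} = transLen g := by
  have hseq : (fun n : ℕ => jointMinDisp ({g} ^ n) / n) = fun n : ℕ => transLen (g ^ n) / n := by
    funext n
    rw [Set.singleton_pow, jointMinDisp_singleton]
  rw [asympDisp, hseq]
  have hbdd : IsBoundedUnder (· ≥ ·) atTop fun n : ℕ => transLen (g ^ n) / n :=
    isBoundedUnder_of ⟨0, fun n => div_nonneg (transLen_nonneg _) n.cast_nonneg⟩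
  refine le_antisymm
    (limsup_le_of_le hbdd.isCoboundedUnder_le (Eventually.of_forall (transLen_pow_div_le g))) ?_
  refine le_limsup_of_frequently_le
    (frequently_atTop.2 fun N => ⟨2 ^ N, Nat.lt_two_pow_self.le, ?_⟩)
    (isBoundedUnder_of ⟨transLen g, transLen_pow_div_le g⟩)
  rw [le_div_iff₀ (by positivity)]
  push_cast
  linarith [two_pow_mul_transLen_le hgeo h4 g N]

end Displacement

section JointDisplacement

variable {X : Type*} [MetricSpace X] {S : Set (X ≃ᵢ X)}

lemma dispSublevel_inter_nonempty [Nonempty X] (hgeo : GeodesicSpace X)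
    (h4 : FourPointCondition X) (hmed : HasMedians X) {a b : X ≃ᵢ X} {r : ℝ} (hr : 0 < r)
    (ha : transLen a < r) (hb : transLen b < r) (hab : transLen (a * b) < 2 * r) :
    (dispSublevel a r ∩ dispSublevel b r).Nonempty := by
  have hne : ∀ {g : X ≃ᵢ X}, transLen g < r → (dispSublevel g r).Nonempty := fun hg =>
    (exists_dist_apply_lt hg).imp fun _ hx => hx.le
  by_contra h
  obtain ⟨y, hy⟩ := exists_dist_apply_lt hab
  exact lt_asymm hy (two_mul_lt_dist_mul_apply hgeo h4 hmed a b hr (hne ha) (hne hb)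
    (disjoint_iff_inter_eq_empty.2 (not_nonempty_iff_eq_empty.1 h)) y)

lemma dist_apply_le_jointDispAt (hS : S.Finite) {s : X ≃ᵢ X} (hs : s ∈ S) (x : X) :
    dist x (s x) ≤ jointDispAt S x :=
  le_csSup (hS.image _).bddAbove (mem_image_of_mem _ hs)

lemma jointMinDisp_le (hS : S.Finite) (hne : S.Nonempty) {x : X} {r : ℝ}
    (h : ∀ s ∈ S, dist x (s x) ≤ r) : jointMinDisp S ≤ r := by
  obtain ⟨s₀, hs₀⟩ := hne
  have hbdd : BddBelow (range (jointDispAt S)) :=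
    ⟨0, forall_mem_range.2 fun y => dist_nonneg.trans (dist_apply_le_jointDispAt hS hs₀ y)⟩
  exact (csInf_le hbdd ⟨x, rfl⟩).trans
    (csSup_le (Set.Nonempty.image _ ⟨s₀, hs₀⟩) (forall_mem_image.2 h))

lemma transLen_le_jointMinDisp [Nonempty X] (hS : S.Finite) {s : X ≃ᵢ X} (hs : s ∈ S) :
    transLen s ≤ jointMinDisp S :=
  le_csInf (range_nonempty _) <| forall_mem_range.2 fun x =>
    (transLen_le s x).trans (dist_apply_le_jointDispAt hS hs x)

lemma transLen_mul_le_jointMinDisp [Nonempty X] (hS : S.Finite) {a b : X ≃ᵢ X} (ha : a ∈ S)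
    (hb : b ∈ S) : transLen (a * b) ≤ 2 * jointMinDisp S := by
  rw [← div_le_iff₀' two_pos]
  refine le_csInf (range_nonempty _) (forall_mem_range.2 fun x => ?_)
  have hab := transLen_le (a * b) x
  have htri := dist_triangle x (a x) (a (b x))
  rw [IsometryEquiv.mul_apply] at hab
  rw [a.dist_eq] at htri
  linarith [dist_apply_le_jointDispAt hS ha x, dist_apply_le_jointDispAt hS hb x]

lemma jointMinDisp_le_of_transLen_le [Nonempty X] (hgeo : GeodesicSpace X)
    (h4 : FourPointCondition X) (hmed : HasMedians X) (hS : S.Finite) (hne : S.Nonempty)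
    {M : ℝ} (h₁ : ∀ a ∈ S, transLen a ≤ M) (h₂ : ∀ a ∈ S, ∀ b ∈ S, transLen (a * b) ≤ 2 * M) :
    jointMinDisp S ≤ M := by
  refine le_of_forall_gt_imp_ge_of_dense fun r hr => ?_
  obtain ⟨s₀, hs₀⟩ := hne
  have hr₀ : 0 < r := ((transLen_nonneg s₀).trans (h₁ s₀ hs₀)).trans_lt hr
  obtain ⟨x, hx⟩ := helly_finset hmed (hS.toFinset_nonempty.2 ⟨s₀, hs₀⟩)
    (fun s => dispSublevel s r) (fun s _ => isBtwConvex_dispSublevel h4 s r)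
    fun a ha b hb => by
      rw [hS.mem_toFinset] at ha hb
      exact dispSublevel_inter_nonempty hgeo h4 hmed hr₀ ((h₁ a ha).trans_lt hr)
        ((h₁ b hb).trans_lt hr) (by linarith [h₂ a ha b hb])
  exact jointMinDisp_le hS ⟨s₀, hs₀⟩ fun s hs => hx s (hS.mem_toFinset.2 hs)

lemma jointMinDisp_eq_sSup [Nonempty X] (hgeo : GeodesicSpace X) (h4 : FourPointCondition X)
    (hmed : HasMedians X) (hS : S.Finite) (hne : S.Nonempty) :
    jointMinDisp S = sSup ((fun p : (X ≃ᵢ X) × (X ≃ᵢ X) =>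
      max (transLen p.1) (transLen (p.1 * p.2) / 2)) '' S ×ˢ S) := by
  have hbdd := ((hS.prod hS).image
    fun p : (X ≃ᵢ X) × (X ≃ᵢ X) => max (transLen p.1) (transLen (p.1 * p.2) / 2)).bddAbove
  refine le_antisymm (jointMinDisp_le_of_transLen_le hgeo h4 hmed hS hne (fun a ha => ?_)
    fun a ha b hb => ?_) (csSup_le ((hne.prod hne).image _) ?_)
  · exact (le_max_left _ _).trans (le_csSup hbdd ⟨(a, a), ⟨ha, ha⟩, rfl⟩)
  · linarith [(le_max_right _ _).trans (le_csSup hbdd ⟨(a, b), ⟨ha, hb⟩, rfl⟩)]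
  · rintro _ ⟨⟨a, b⟩, ⟨ha, hb⟩, rfl⟩
    exact max_le (transLen_le_jointMinDisp hS ha)
      (by linarith [transLen_mul_le_jointMinDisp hS ha hb])

end JointDisplacement

lemma sSup_image_max_div_two {G : Type*} [Monoid G] (f : G → ℝ) {S : Set G} (hS : S.Finite)
    (hne : S.Nonempty) :
    sSup ((fun p : G × G => max (f p.1) (f (p.1 * p.2) / 2)) '' S ×ˢ S) =
      max (sSup (f '' S)) (sSup (f '' (S ^ 2)) / 2) := by
  rw [sq]
  have hbdd := ((hS.prod hS).image fun p : G × G => max (f p.1) (f (p.1 * p.2) / 2)).bddAbove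
  refine le_antisymm (csSup_le ((hne.prod hne).image _) ?_)
    (max_le (csSup_le (hne.image f) ?_) ((div_le_iff₀ two_pos).2 <|
      csSup_le ((hne.mul hne).image f) ?_))
  · rintro _ ⟨⟨a, b⟩, ⟨ha, hb⟩, rfl⟩
    exact max_le_max (le_csSup (hS.image f).bddAbove (mem_image_of_mem f ha))
      (div_le_div_of_nonneg_right (le_csSup ((hS.mul hS).image f).bddAbove
        (mem_image_of_mem f (mul_mem_mul ha hb))) zero_le_two)
  · rintro _ ⟨a, ha, rfl⟩
    exact (le_max_left _ _).trans (le_csSup hbdd ⟨(a, a), ⟨ha, ha⟩, rfl⟩)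
  · rintro _ ⟨_, ⟨a, ha, b, hb, rfl⟩, rfl⟩
    linarith [(le_max_right _ _).trans (le_csSup hbdd ⟨(a, b), ⟨ha, hb⟩, rfl⟩)]

/-- For a finite set `S` of isometries of a real tree (a geodesic `0`-hyperbolic
space), `L(S) = max_{a,b ∈ S} max{L(a), L(ab)/2} = λ₂(S)`. -/
theorem jointMinDisp_formula_tree {X : Type*} [MetricSpace X]
    (hgeo : GeodesicSpace X) (htree : GromovHyperbolic X 0)
    (S : Set (X ≃ᵢ X)) (hfin : S.Finite) (hne : S.Nonempty) :
    jointMinDisp S =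
      sSup ((fun p : (X ≃ᵢ X) × (X ≃ᵢ X) =>
        max (jointMinDisp {p.1}) (jointMinDisp {p.1 * p.2} / 2)) '' S ×ˢ S) ∧
    jointMinDisp S = max (lamD S) (lamD (S ^ 2) / 2) := by
  rcases isEmpty_or_nonempty X with hX | hX
  · simp [jointMinDisp_of_isEmpty, lamD, asympDisp, (hne.prod hne).image_const,
      hne.image_const, hne.pow.image_const]
  have h4 := fourPointCondition_of_tree hgeo htree
  have hL := jointMinDisp_eq_sSup hgeo h4 (hasMedians_of_tree hgeo htree) hfin hne
  simp only [jointMinDisp_singleton, lamD, asympDisp_singleton hgeo h4]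
  exact ⟨hL, hL.trans (sSup_image_max_div_two transLen hfin hne)⟩
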